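/- Let k and c be positive integers, S_L = {1, 2, …, k} and S_R = {c+1, c+2, …, c+k}. Then the outcome sequence of the partizan subtraction game (S_L, S_R) is purely periodic with period c+k+1: writing r = n mod (c+k+1), the outcome of n is P if r = 0, L if 1 ≤ r ≤ c, and N if c+1 ≤ r ≤ c+k. -/
import Mathlib


mutual
def LeftFirstWins (SL SR : Finset ℕ) : ℕ → Prop
  | n => ∃ s ∈ SL, ∃ (_ : 0 < s) (_ : s ≤ n), ¬ RightFirstWins SL SR (n - s)
  termination_by n => n
  decreasing_by omega
def RightFirstWins (SL SR : Finset ℕ) : ℕ → Prop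
  | n => ∃ s ∈ SR, ∃ (_ : 0 < s) (_ : s ≤ n), ¬ LeftFirstWins SL SR (n - s)
  termination_by n => n
  decreasing_by omega
end

inductive Outcome | P | L | R | N
deriving DecidableEq

open Classical in
noncomputable def outcome (SL SR : Finset ℕ) (n : ℕ) : Outcome :=
  if LeftFirstWins SL SR n then
    if RightFirstWins SL SR n then .N else .L
  else
    if RightFirstWins SL SR n then .R else .P

private lemma mod_sub_le (p n s : ℕ) (hp : 0 < p) (h : s ≤ n % p) :
    (n - s) % p = n % p - s := by
  have h1 := Nat.div_add_mod n p
  have h2 : n % p < p := Nat.mod_lt _ hp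
  have h3 : n - s = p * (n / p) + (n % p - s) := by omega
  rw [h3, Nat.mul_add_mod, Nat.mod_eq_of_lt (by omega)]

private lemma mod_sub_gt (p n s : ℕ) (h : n % p < s) (hs : s ≤ n) (hsp : s < p) :
    (n - s) % p = n % p + p - s := by
  have h1 := Nat.div_add_mod n p
  have h2 : n % p < p := Nat.mod_lt _ (by omega)
  have hnp : p ≤ n := by
    by_contra h'
    push_neg at h'
    rw [Nat.mod_eq_of_lt h'] at h
    omega
  have hq : 1 ≤ n / p := (Nat.one_le_div_iff (by omega)).mpr hnp
  have h4 : p * (n / p - 1) = p * (n / p) - p := by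
    rw [Nat.mul_sub, Nat.mul_one]
  have h5 : p ≤ p * (n / p) := Nat.le_mul_of_pos_right p hq
  have h3 : n - s = p * (n / p - 1) + (n % p + p - s) := by omega
  rw [h3, Nat.mul_add_mod]
  exact Nat.mod_eq_of_lt (by omega)

private lemma key (k c : ℕ) (hk : 0 < k) (hc : 0 < c) : ∀ n,
    (LeftFirstWins (Finset.Icc 1 k) (Finset.Icc (c + 1) (c + k)) n ↔ n % (c + k + 1) ≠ 0) ∧
    (RightFirstWins (Finset.Icc 1 k) (Finset.Icc (c + 1) (c + k)) n ↔ c + 1 ≤ n % (c + k + 1)) := by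
  intro n
  induction n using Nat.strong_induction_on with
  | _ n ih =>
  set p := c + k + 1 with hp
  have hppos : 0 < p := by omega
  have hrlt : n % p < p := Nat.mod_lt _ hppos
  constructor
  · rw [LeftFirstWins]
    constructor
    · rintro ⟨s, hs, hpos, hsn, hR⟩
      simp only [Finset.mem_Icc] at hs
      intro hr0
      -- n % p = 0, so s > n % p, and residue of n - s is p - s ∈ [c+1, c+k]
      have hres : (n - s) % p = n % p + p - s :=
        mod_sub_gt p n s (by omega) hsn (by omega)
      have := (ih (n - s) (by omega)).2
      exact hR (this.mpr (by omega))
    · intro hr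
      set r := n % p with hrdef
      refine ⟨max 1 (r - c), ?_, ?_, ?_, ?_⟩
      · simp only [Finset.mem_Icc]
        constructor
        · omega
        · omega
      · omega
      · have : r ≤ n := Nat.mod_le n p
        omega
      · have hsle : max 1 (r - c) ≤ r := by omega
        have hres : (n - max 1 (r - c)) % p = r - max 1 (r - c) :=
          mod_sub_le p n _ hppos hsle
        have := (ih (n - max 1 (r - c)) (by have := Nat.mod_le n p; omega)).2
        rw [this, hres]
        omega
  · rw [RightFirstWins]
    constructor
    · rintro ⟨s, hs, hpos, hsn, hL⟩
      simp only [Finset.mem_Icc] at hs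
      by_contra hr
      push_neg at hr
      -- n % p ≤ c < s; residue of n - s is n % p + p - s ∈ [1, c+k], nonzero
      have hres : (n - s) % p = n % p + p - s :=
        mod_sub_gt p n s (by omega) hsn (by omega)
      have := (ih (n - s) (by omega)).1
      exact hL (this.mpr (by omega))
    · intro hr
      set r := n % p with hrdef
      refine ⟨r, ?_, by omega, Nat.mod_le n p, ?_⟩
      · simp only [Finset.mem_Icc]
        omega
      · have hres : (n - r) % p = 0 := by
          rw [mod_sub_le p n r hppos (le_refl r)]
          omega
        have := (ih (n - r) (by have := Nat.mod_le n p; omega)).1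
        rw [this, hres]
        simp

theorem stmt_10 (k c : ℕ) (hk : 0 < k) (hc : 0 < c) (n : ℕ) :
    (n % (c + k + 1) = 0 → outcome (Finset.Icc 1 k) (Finset.Icc (c + 1) (c + k)) n = .P) ∧
    (1 ≤ n % (c + k + 1) → n % (c + k + 1) ≤ c →
      outcome (Finset.Icc 1 k) (Finset.Icc (c + 1) (c + k)) n = .L) ∧
    (c + 1 ≤ n % (c + k + 1) →
      outcome (Finset.Icc 1 k) (Finset.Icc (c + 1) (c + k)) n = .N) := by
  obtain ⟨hL, hR⟩ := key k c hk hc n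
  unfold outcome
  refine ⟨?_, ?_, ?_⟩ <;> intros <;> split_ifs with h1 h2 <;>
    first
      | rfl
      | (exfalso; rw [hL] at * ; rw [hR] at *; omega)
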